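/- arXiv:1905.13328 — 4 statements merged into one kernel-verified Lean document; each statement's English description precedes it below -/
import Mathlib

section
/- Let H be a real Hilbert space with dual H*, and let M : H × ℝ → H* × ℝ be the block operator M(v,t) = (Av + t·b, ⟨c,v⟩_H + d·t), where A : H → H* is bounded linear and self-adjoint (⟨Av,w⟩ = ⟨Aw,v⟩ for all v,w), b ∈ H* \ {0}, c ∈ H \ {0}, d ∈ ℝ. If A is an isomorphism from H onto H*, then M is an isomorphism from H × ℝ onto H* × ℝ if and only if d − ⟨c, A⁻¹b⟩_H ≠ 0. -/
/-!
Eliminating `v = A⁻¹ (f - t • b)` reduces `M (v, t) = (f, s)` to the scalar equation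
`(d - ⟪c, A⁻¹ b⟫) t = s - ⟪c, A⁻¹ f⟫` for the Schur complement `d - ⟪c, A⁻¹ b⟫`. When it is nonzero
this gives an explicit, hence continuous, inverse of `M`; when it vanishes, `(-A⁻¹ b, 1)` lies in
the kernel of `M`.
-/

open RealInnerProductSpace

namespace ContinuousLinearMap

variable {𝕜 E F : Type*} [NontriviallyNormedField 𝕜] [NormedAddCommGroup E] [NormedSpace 𝕜 E]
  [NormedAddCommGroup F] [NormedSpace 𝕜 F]

def bordered (A : E →L[𝕜] F) (b : F) (c : StrongDual 𝕜 E) (d : 𝕜) : E × 𝕜 →L[𝕜] F × 𝕜 :=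
  (A.coprod (toSpanSingleton 𝕜 b)).prod (c.coprod (d • 1))

@[simp]
theorem bordered_apply (A : E →L[𝕜] F) (b : F) (c : StrongDual 𝕜 E) (d : 𝕜) (v : E) (t : 𝕜) :
    bordered A b c d (v, t) = (A v + t • b, c v + d * t) := by
  simp [bordered]

def borderedInv (eA : E ≃L[𝕜] F) (b : F) (c : StrongDual 𝕜 E) (d : 𝕜) : F × 𝕜 →L[𝕜] E × 𝕜 :=
  let t : F × 𝕜 →L[𝕜] 𝕜 := (d - c (eA.symm b))⁻¹ • (-(c.comp (eA.symm : F →L[𝕜] E))).coprod 1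
  ((eA.symm : F →L[𝕜] E).coprod 0 - (toSpanSingleton 𝕜 (eA.symm b)).comp t).prod t

@[simp]
theorem borderedInv_apply (eA : E ≃L[𝕜] F) (b : F) (c : StrongDual 𝕜 E) (d : 𝕜) (f : F) (s : 𝕜) :
    borderedInv eA b c d (f, s) =
      (eA.symm f - ((d - c (eA.symm b))⁻¹ * (s - c (eA.symm f))) • eA.symm b,
        (d - c (eA.symm b))⁻¹ * (s - c (eA.symm f))) := by
  simp [borderedInv, sub_eq_neg_add, smul_smul]

theorem bordered_apply_neg_symm_one (eA : E ≃L[𝕜] F) (b : F) (c : StrongDual 𝕜 E) (d : 𝕜) :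
    bordered eA b c d (-eA.symm b, 1) = (0, d - c (eA.symm b)) := by
  simp [sub_eq_neg_add]

theorem borderedInv_leftInverse (eA : E ≃L[𝕜] F) (b : F) (c : StrongDual 𝕜 E) {d : 𝕜}
    (hd : d - c (eA.symm b) ≠ 0) :
    Function.LeftInverse (borderedInv eA b c d) (bordered eA b c d) := by
  rintro ⟨v, t⟩
  have ht : (d - c (eA.symm b))⁻¹ * (d * t - t * c (eA.symm b)) = t := by
    rw [show d * t - t * c (eA.symm b) = (d - c (eA.symm b)) * t by ring, inv_mul_cancel_left₀ hd]
  simp [ht]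

theorem borderedInv_rightInverse (eA : E ≃L[𝕜] F) (b : F) (c : StrongDual 𝕜 E) {d : 𝕜}
    (hd : d - c (eA.symm b) ≠ 0) :
    Function.RightInverse (borderedInv eA b c d) (bordered eA b c d) := by
  rintro ⟨f, s⟩
  set t := (d - c (eA.symm b))⁻¹ * (s - c (eA.symm f))
  have ht : t * (d - c (eA.symm b)) = s - c (eA.symm f) := by
    simp only [t]; field_simp
  simp only [bordered_apply, borderedInv_apply, map_sub, map_smul, ContinuousLinearEquiv.coe_coe,
    ContinuousLinearEquiv.apply_symm_apply, smul_eq_mul, Prod.mk.injEq]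
  constructor
  · abel
  · linear_combination ht

theorem exists_equiv_bordered_iff (eA : E ≃L[𝕜] F) (b : F) (c : StrongDual 𝕜 E) (d : 𝕜) :
    (∃ e : (E × 𝕜) ≃L[𝕜] (F × 𝕜), ⇑e = bordered eA b c d) ↔ d - c (eA.symm b) ≠ 0 := by
  refine ⟨?_, fun hd => ⟨ContinuousLinearEquiv.equivOfInverse _ _
    (borderedInv_leftInverse eA b c hd) (borderedInv_rightInverse eA b c hd), rfl⟩⟩
  rintro ⟨e, he⟩ hd
  have hker : e (-eA.symm b, 1) = e 0 := by
    rw [he, bordered_apply_neg_symm_one, hd, map_zero, Prod.mk_zero_zero]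
  simpa using e.injective hker

end ContinuousLinearMap

theorem abcd_lemma_regular_general
    {H : Type*} [NormedAddCommGroup H] [InnerProductSpace ℝ H]
    (A : H →L[ℝ] StrongDual ℝ H)
    (eA : H ≃L[ℝ] StrongDual ℝ H) (heA : ⇑eA = ⇑A)
    (b : StrongDual ℝ H)
    (c : H) (d : ℝ)
    (M : (H × ℝ) →L[ℝ] (StrongDual ℝ H × ℝ))
    (hM : ∀ (v : H) (t : ℝ), M (v, t) = (A v + t • b, ⟪c, v⟫ + d * t)) :
    (∃ e : (H × ℝ) ≃L[ℝ] (StrongDual ℝ H × ℝ), ⇑e = ⇑M) ↔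
      d - ⟪c, eA.symm b⟫ ≠ 0 := by
  have hM_bordered : M = ContinuousLinearMap.bordered eA b (innerSL ℝ c) d := by
    refine ContinuousLinearMap.ext fun ⟨v, t⟩ => ?_
    simp [hM, heA]
  rw [hM_bordered]
  exact ContinuousLinearMap.exists_equiv_bordered_iff eA b (innerSL ℝ c) d

/-- ABCD Lemma, part (i): if `A` is an isomorphism, the block operator
`M(v,t) = (Av + t•b, ⟪c,v⟫ + d t)` is an isomorphism iff `d - ⟪c, A⁻¹ b⟫ ≠ 0`. -/
theorem abcd_lemma_regular
    {H : Type*} [NormedAddCommGroup H] [InnerProductSpace ℝ H] [CompleteSpace H]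
    (A : H →L[ℝ] StrongDual ℝ H)
    (hA_sym : ∀ v w : H, A v w = A w v)
    (eA : H ≃L[ℝ] StrongDual ℝ H) (heA : ⇑eA = ⇑A)
    (b : StrongDual ℝ H) (hb : b ≠ 0)
    (c : H) (hc : c ≠ 0) (d : ℝ)
    (M : (H × ℝ) →L[ℝ] (StrongDual ℝ H × ℝ))
    (hM : ∀ (v : H) (t : ℝ), M (v, t) = (A v + t • b, ⟪c, v⟫ + d * t)) :
    (∃ e : (H × ℝ) ≃L[ℝ] (StrongDual ℝ H × ℝ), ⇑e = ⇑M) ↔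
      d - ⟪c, eA.symm b⟫ ≠ 0 :=
  abcd_lemma_regular_general A eA heA b c d M hM
end

section
/- Let H be a real Hilbert space and M : H × ℝ → H* × ℝ the block operator M(v,t) = (Av + t·b, (c,v)_H + d·t), with A : H → H* bounded linear self-adjoint such that Ker(A) is one-dimensional spanned by γ ≠ 0 and Range(A) has codimension 1 (A is Fredholm of index 0), b ∈ H*, c ∈ H, d ∈ ℝ. Then M is an isomorphism from H × ℝ onto H* × ℝ if and only if ⟨b, γ⟩ ≠ 0 and (c, γ)_H ≠ 0. -/
/-!
Evaluation at `γ` kills the range of `A` because `⟨Av, γ⟩ = ⟨Aγ, v⟩ = 0`; since both subspaces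
have codimension one, `Range(A) = {f | f γ = 0}`. Solving `M(v, t) = (f, r)` then decouples:
applying the first equation to `γ` determines `t = f γ / ⟨b, γ⟩`, after which `Av = f - t b` has
a solution `u`, unique up to multiples `s γ`, and the second equation fixes
`s = (r - d t - (c, u)) / (c, γ)`. If `⟨b, γ⟩ = 0` the image misses every `f` with `f γ ≠ 0`;
if `(c, γ) = 0` then `(γ, 0)` lies in the kernel.
-/

open RealInnerProductSpace

theorem Submodule.eq_of_le_of_finrank_quotient_eq {K V : Type*} [Field K] [AddCommGroup V]
    [Module K V] {S T : Submodule K V} [FiniteDimensional K (V ⧸ S)] (hle : S ≤ T)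
    (h : Module.finrank K (V ⧸ S) = Module.finrank K (V ⧸ T)) : S = T := by
  have hsurj := Submodule.factor_surjective hle
  have : FiniteDimensional K (V ⧸ T) := Module.Finite.of_surjective _ hsurj
  have hinj := (LinearMap.injective_iff_surjective_of_finrank_eq_finrank h).mpr hsurj
  refine le_antisymm hle fun x hx => ?_
  rw [← Submodule.Quotient.mk_eq_zero] at hx ⊢
  exact hinj ((Submodule.factor_mk hle x).trans (hx.trans (map_zero _).symm))

theorem LinearMap.range_eq_ker_of_finrank_quotient_eq_one {K V W : Type*} [Field K]
    [AddCommGroup V] [Module K V] [AddCommGroup W] [Module K W] {A : V →ₗ[K] W}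
    {ψ : Module.Dual K W} (hψ : ψ ≠ 0) (hψA : ψ ∘ₗ A = 0)
    (hcodim : Module.finrank K (W ⧸ LinearMap.range A) = 1) :
    LinearMap.range A = LinearMap.ker ψ := by
  have : FiniteDimensional K (W ⧸ LinearMap.range A) := .of_finrank_pos (by omega)
  refine Submodule.eq_of_le_of_finrank_quotient_eq ?_ ?_
  · rintro _ ⟨v, rfl⟩
    exact LinearMap.congr_fun hψA v
  · rw [hcodim, (ψ.quotKerEquivOfSurjective (LinearMap.surjective hψ)).finrank_eq,
      Module.finrank_self]

theorem ContinuousLinearMap.exists_continuousLinearEquiv_coe_eq_iff_bijective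
    {𝕜 E F : Type*} [NontriviallyNormedField 𝕜] [NormedAddCommGroup E] [NormedSpace 𝕜 E]
    [CompleteSpace E] [NormedAddCommGroup F] [NormedSpace 𝕜 F] [CompleteSpace F] (f : E →L[𝕜] F) :
    (∃ e : E ≃L[𝕜] F, ⇑e = ⇑f) ↔ Function.Bijective f :=
  ⟨fun ⟨e, he⟩ => he ▸ e.bijective, fun h =>
    ⟨.ofBijective f (LinearMap.ker_eq_bot.mpr h.1) (LinearMap.range_eq_top.mpr h.2), rfl⟩⟩

section BorderedMap

variable {K E F : Type*} [Field K] [AddCommGroup E] [Module K E] [AddCommGroup F] [Module K F]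

def borderedMap (A : E →ₗ[K] F) (b : F) (c : Module.Dual K E) (d : K) : E × K →ₗ[K] F × K :=
  (A.coprod (LinearMap.toSpanSingleton K F b)).prod (c.coprod (d • LinearMap.id))

variable {A : E →ₗ[K] F} {b : F} {c : Module.Dual K E} {d : K} {γ : E} {ψ : Module.Dual K F}

@[simp]
theorem borderedMap_apply (v : E) (t : K) :
    borderedMap A b c d (v, t) = (A v + t • b, c v + d * t) := by
  simp [borderedMap]

theorem borderedMap_injective (hker : LinearMap.ker A ≤ Submodule.span K {γ})
    (hψA : ψ ∘ₗ A = 0) (hb : ψ b ≠ 0) (hc : c γ ≠ 0) :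
    Function.Injective (borderedMap A b c d) := by
  rw [← LinearMap.ker_eq_bot, LinearMap.ker_eq_bot']
  rintro ⟨v, t⟩ h
  simp only [borderedMap_apply, Prod.mk_eq_zero] at h
  obtain ⟨h₁, h₂⟩ := h
  have ht : t = 0 := by
    have := congrArg ψ h₁
    rw [map_add, map_smul, ← LinearMap.comp_apply, hψA] at this
    simpa [hb] using this
  subst ht
  rw [zero_smul, add_zero] at h₁
  obtain ⟨s, rfl⟩ := Submodule.mem_span_singleton.mp (hker h₁)
  simp_all

theorem borderedMap_surjective (hγ : A γ = 0) (hrange : LinearMap.ker ψ ≤ LinearMap.range A)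
    (hb : ψ b ≠ 0) (hc : c γ ≠ 0) :
    Function.Surjective (borderedMap A b c d) := by
  rintro ⟨f, r⟩
  set t := ψ f / ψ b
  obtain ⟨u, hu⟩ : f - t • b ∈ LinearMap.range A := hrange (by simp [t, hb])
  set s := (r - d * t - c u) / c γ
  refine ⟨(u + s • γ, t), ?_⟩
  simp only [borderedMap_apply, map_add, map_smul, hγ, hu, smul_zero, add_zero, sub_add_cancel,
    smul_eq_mul, Prod.mk.injEq, true_and]
  simp only [s, div_mul_cancel₀ _ hc]
  ring

theorem not_surjective_borderedMap (hψ : ψ ≠ 0) (hψA : ψ ∘ₗ A = 0) (hb : ψ b = 0) :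
    ¬ Function.Surjective (borderedMap A b c d) := by
  intro hsurj
  obtain ⟨f, hf⟩ := DFunLike.ne_iff.mp hψ
  obtain ⟨⟨v, t⟩, hvt⟩ := hsurj (f, 0)
  have := congrArg (ψ ∘ Prod.fst) hvt
  simp only [Function.comp_apply, borderedMap_apply, map_add, map_smul, hb, smul_zero,
    add_zero, ← LinearMap.comp_apply, hψA] at this
  exact hf this.symm

theorem not_injective_borderedMap (hγA : A γ = 0) (hγ : γ ≠ 0) (hc : c γ = 0) :
    ¬ Function.Injective (borderedMap A b c d) := fun hinj =>
  hγ (congrArg Prod.fst (hinj (show borderedMap A b c d (γ, 0) = borderedMap A b c d (0, 0) by simp [hγA, hc])))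

theorem borderedMap_bijective_iff (hker : LinearMap.ker A = Submodule.span K {γ}) (hγ : γ ≠ 0)
    (hrange : LinearMap.range A = LinearMap.ker ψ) (hψ : ψ ≠ 0) :
    Function.Bijective (borderedMap A b c d) ↔ ψ b ≠ 0 ∧ c γ ≠ 0 := by
  have hγA : A γ = 0 := (hker ▸ Submodule.mem_span_singleton_self γ : γ ∈ LinearMap.ker A)
  have hψA : ψ ∘ₗ A = 0 := LinearMap.ext fun v => (hrange ▸ LinearMap.mem_range_self A v :)
  refine ⟨fun h => ⟨fun hb => not_surjective_borderedMap hψ hψA hb h.2,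
    fun hc => not_injective_borderedMap hγA hγ hc h.1⟩, fun ⟨hb, hc⟩ => ⟨?_, ?_⟩⟩
  · exact borderedMap_injective hker.le hψA hb hc
  · exact borderedMap_surjective hγA hrange.ge hb hc

end BorderedMap

theorem abcd_lemma_fold_general
    {H : Type*} [NormedAddCommGroup H] [InnerProductSpace ℝ H] [CompleteSpace H]
    (A : H →L[ℝ] StrongDual ℝ H)
    (hA_sym : ∀ v w : H, A v w = A w v)
    (γ : H) (hγ : γ ≠ 0)
    (hker : LinearMap.ker (A : H →ₗ[ℝ] StrongDual ℝ H) = Submodule.span ℝ {γ})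
    (hcodim : Module.finrank ℝ (StrongDual ℝ H ⧸ LinearMap.range (A : H →ₗ[ℝ] StrongDual ℝ H)) = 1)
    (b : StrongDual ℝ H) (c : H) (d : ℝ)
    (M : (H × ℝ) →L[ℝ] (StrongDual ℝ H × ℝ))
    (hM : ∀ (v : H) (t : ℝ), M (v, t) = (A v + t • b, ⟪c, v⟫ + d * t)) :
    (∃ e : (H × ℝ) ≃L[ℝ] (StrongDual ℝ H × ℝ), ⇑e = ⇑M) ↔
      (b γ ≠ 0 ∧ ⟪c, γ⟫ ≠ 0) := by
  have hγA : A γ = 0 := (hker ▸ Submodule.mem_span_singleton_self γ :)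
  let ψ : Module.Dual ℝ (StrongDual ℝ H) := ContinuousLinearMap.apply ℝ ℝ γ
  have hψ : ψ ≠ 0 := fun h => hγ (by simpa [ψ] using LinearMap.congr_fun h (innerSL ℝ γ))
  have hψA : ψ ∘ₗ (A : H →ₗ[ℝ] StrongDual ℝ H) = 0 := by
    ext v
    simp [ψ, hA_sym v γ, hγA]
  have hMeq : ⇑M = borderedMap (A : H →ₗ[ℝ] StrongDual ℝ H) b (innerₛₗ ℝ c) d :=
    funext fun ⟨v, t⟩ => by simp [hM]
  rw [M.exists_continuousLinearEquiv_coe_eq_iff_bijective, hMeq,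
    borderedMap_bijective_iff hker hγ
      (LinearMap.range_eq_ker_of_finrank_quotient_eq_one hψ hψA hcodim) hψ]
  rfl

/-- ABCD Lemma, part (ii): if `A` is self-adjoint with one-dimensional kernel
spanned by `γ ≠ 0` and closed range of codimension one (Fredholm of index 0),
then the block operator `M(v,t) = (Av + t•b, ⟪c,v⟫ + d t)` is an isomorphism
iff `⟨b, γ⟩ ≠ 0` and `⟪c, γ⟫ ≠ 0`. -/
theorem abcd_lemma_fold
    {H : Type*} [NormedAddCommGroup H] [InnerProductSpace ℝ H] [CompleteSpace H]
    (A : H →L[ℝ] StrongDual ℝ H)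
    (hA_sym : ∀ v w : H, A v w = A w v)
    (γ : H) (hγ : γ ≠ 0)
    (hker : LinearMap.ker (A : H →ₗ[ℝ] StrongDual ℝ H) = Submodule.span ℝ {γ})
    (hrange_closed : IsClosed (LinearMap.range (A : H →ₗ[ℝ] StrongDual ℝ H) : Set (StrongDual ℝ H)))
    (hcodim : Module.finrank ℝ (StrongDual ℝ H ⧸ LinearMap.range (A : H →ₗ[ℝ] StrongDual ℝ H)) = 1)
    (b : StrongDual ℝ H) (c : H) (d : ℝ)
    (M : (H × ℝ) →L[ℝ] (StrongDual ℝ H × ℝ))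
    (hM : ∀ (v : H) (t : ℝ), M (v, t) = (A v + t • b, ⟪c, v⟫ + d * t)) :
    (∃ e : (H × ℝ) ≃L[ℝ] (StrongDual ℝ H × ℝ), ⇑e = ⇑M) ↔
      (b γ ≠ 0 ∧ ⟪c, γ⟫ ≠ 0) :=
  abcd_lemma_fold_general A hA_sym γ hγ hker hcodim b c d M hM
end

section
/- Let H be a real Hilbert space, A : H → H* bounded linear and self-adjoint, J : H → H* the Riesz isomorphism, and suppose there exist μ < 0 and γ ∈ H with ‖γ‖ = 1 such that Aγ = μJγ, and a constant c > 0 such that ⟨Aw, w⟩ ≥ c‖w‖² for all w in the orthogonal complement U = {w : (w,γ)_H = 0}. Then A is an isomorphism from H onto H*, and moreover ‖Av‖_{H*} ≥ (1/2)·min(|μ|, c)·‖v‖ for all v ∈ H. -/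
/-!
Write `v = α • γ + w` with `w ⊥ γ`. Testing `A v` against `γ` gives `|μ| |α| ≤ ‖A v‖`; since
`A w` vanishes on `γ`, `A v w = A w w ≥ c ‖w‖²`, so `c ‖w‖ ≤ ‖A v‖`. Adding the two bounds gives the
lower bound. Through the Riesz map, `A` becomes a symmetric operator on `H` that is bounded below,
so its range is closed and its orthogonal complement is the (trivial) kernel: `A` is onto.
-/

open RealInnerProductSpace

lemma mul_norm_le_opNorm_of_mul_sq_le {E : Type*} [SeminormedAddCommGroup E] [NormedSpace ℝ E]
    {f : StrongDual ℝ E} {c : ℝ} {w : E} (h : c * ‖w‖ ^ 2 ≤ f w) : c * ‖w‖ ≤ ‖f‖ := by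
  rcases (norm_nonneg w).eq_or_lt with hw | hw
  · rw [← hw, mul_zero]
    exact norm_nonneg f
  · have : c * ‖w‖ * ‖w‖ ≤ ‖f‖ * ‖w‖ := calc
      c * ‖w‖ * ‖w‖ = c * ‖w‖ ^ 2 := by ring
      _ ≤ f w := h
      _ ≤ ‖f‖ * ‖w‖ := (le_abs_self _).trans (f.le_opNorm w)
    exact le_of_mul_le_mul_right this hw

section

variable {H : Type*} [NormedAddCommGroup H] [InnerProductSpace ℝ H] [CompleteSpace H]

lemma ContinuousLinearMap.range_eq_top_of_isSymmetric_of_antilipschitz {T : H →L[ℝ] H}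
    (hT : (T : H →ₗ[ℝ] H).IsSymmetric) {K : NNReal} (hanti : AntilipschitzWith K T) :
    T.range = ⊤ := by
  have : CompleteSpace T.range := (hanti.isClosed_range T.uniformContinuous).completeSpace_coe
  rw [← Submodule.orthogonal_eq_bot_iff, hT.orthogonal_range, LinearMap.ker_eq_bot]
  exact hanti.injective

open InnerProductSpace in
lemma exists_continuousLinearEquiv_of_symm_of_bound (A : H →L[ℝ] StrongDual ℝ H)
    (hA : ∀ v w, A v w = A w v) {k : ℝ} (hk : 0 < k) (hbd : ∀ v, k * ‖v‖ ≤ ‖A v‖) :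
    ∃ e : H ≃L[ℝ] StrongDual ℝ H, ⇑e = ⇑A := by
  set T := continuousLinearMapOfBilin A
  have hTA : ∀ v, toDual ℝ H (T v) = A v := fun v => by
    ext w
    exact continuousLinearMapOfBilin_apply A v w
  have hT : (T : H →ₗ[ℝ] H).IsSymmetric := fun v w => by
    change ⟪T v, w⟫ = ⟪v, T w⟫
    rw [continuousLinearMapOfBilin_apply, real_inner_comm, continuousLinearMapOfBilin_apply, hA]
  have hanti : AntilipschitzWith ⟨k⁻¹, (inv_pos.2 hk).le⟩ T :=
    T.antilipschitz_of_bound fun v => by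
      change ‖v‖ ≤ k⁻¹ * ‖T v‖
      rw [le_inv_mul_iff₀ hk, ← (toDual ℝ H).norm_map (T v), hTA]
      exact hbd v
  exact ⟨(ContinuousLinearEquiv.ofBijective T (LinearMap.ker_eq_bot.2 hanti.injective)
    (T.range_eq_top_of_isSymmetric_of_antilipschitz hT hanti)).trans
    (toDual ℝ H).toContinuousLinearEquiv, funext hTA⟩

lemma apply_eigenvector_eq {A : H →L[ℝ] StrongDual ℝ H} (hA : ∀ v w, A v w = A w v) {μ : ℝ}
    {γ : H} (heig : A γ = μ • InnerProductSpace.toDual ℝ H γ) (v : H) :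
    A v γ = μ * ⟪v, γ⟫ := by
  rw [hA, heig, smul_apply, InnerProductSpace.toDual_apply_apply, smul_eq_mul, real_inner_comm]

lemma half_min_mul_norm_le_norm_apply {A : H →L[ℝ] StrongDual ℝ H} (hA : ∀ v w, A v w = A w v)
    {μ : ℝ} {γ : H} (hγ : ‖γ‖ = 1) (heig : A γ = μ • InnerProductSpace.toDual ℝ H γ)
    {c : ℝ} (hc : 0 ≤ c) (hcoer : ∀ w : H, ⟪w, γ⟫ = 0 → c * ‖w‖ ^ 2 ≤ A w w) (v : H) :
    (1 / 2) * min |μ| c * ‖v‖ ≤ ‖A v‖ := by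
  set α := ⟪v, γ⟫
  set w := v - α • γ
  have hv : v = α • γ + w := by simp [w]
  have hwγ : ⟪w, γ⟫ = 0 := by
    rw [inner_sub_left, real_inner_smul_left, real_inner_self_eq_norm_sq, hγ]
    ring
  have hα : |μ| * |α| ≤ ‖A v‖ := by
    simpa [apply_eigenvector_eq hA heig, abs_mul, hγ] using (A v).le_opNorm γ
  have hAvw : A v w = A w w := by
    rw [hA, hv, map_add, map_smul, apply_eigenvector_eq hA heig, hwγ]
    simp
  have hw : c * ‖w‖ ≤ ‖A v‖ := mul_norm_le_opNorm_of_mul_sq_le (hAvw ▸ hcoer w hwγ)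
  have hnorm : ‖v‖ ≤ |α| + ‖w‖ := by
    simpa [hv, norm_smul, hγ] using norm_add_le (α • γ) w
  have hmin : 0 ≤ min |μ| c := le_min (abs_nonneg μ) hc
  calc (1 / 2) * min |μ| c * ‖v‖
      ≤ (1 / 2) * (min |μ| c * |α| + min |μ| c * ‖w‖) := by
        rw [mul_assoc, ← mul_add]
        gcongr
    _ ≤ (1 / 2) * (|μ| * |α| + c * ‖w‖) := by
        gcongr
        exacts [min_le_left _ _, min_le_right _ _]
    _ ≤ ‖A v‖ := by linarith

end

/-- Stability estimate on an unstable segment: if `A` is self-adjoint with a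
negative eigenvalue `μ` (eigenvector `γ`, via the Riesz map `J`) and is
coercive with constant `c` on the orthogonal complement of `γ`, then `A` is an
isomorphism and `‖Av‖ ≥ (1/2) min(|μ|,c) ‖v‖` for all `v`. -/
theorem isomorphism_on_unstable_segment
    {H : Type*} [NormedAddCommGroup H] [InnerProductSpace ℝ H] [CompleteSpace H]
    (A : H →L[ℝ] StrongDual ℝ H)
    (hA_sym : ∀ v w : H, A v w = A w v)
    (μ : ℝ) (hμ : μ < 0) (γ : H) (hγ : ‖γ‖ = 1)
    (heig : A γ = μ • (InnerProductSpace.toDual ℝ H γ))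
    (c : ℝ) (hc : 0 < c)
    (hcoer : ∀ w : H, ⟪w, γ⟫ = 0 → c * ‖w‖ ^ 2 ≤ A w w) :
    (∃ e : H ≃L[ℝ] StrongDual ℝ H, ⇑e = ⇑A) ∧
      ∀ v : H, (1 / 2) * min |μ| c * ‖v‖ ≤ ‖A v‖ := by
  have hbd := half_min_mul_norm_le_norm_apply hA_sym hγ heig hc.le hcoer
  have hk : 0 < (1 / 2) * min |μ| c := mul_pos one_half_pos (lt_min (abs_pos.2 hμ.ne) hc)
  exact ⟨exists_continuousLinearEquiv_of_symm_of_bound A hA_sym hk hbd, hbd⟩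
end

section
/- (Discrete log-Sobolev-type bound on the crack faces, in the homogeneous case.) Let v : ℤ² → ℝ with v(0) = 0 and ‖Dv‖_{ℓ²} < ∞, where Dv(m) = (v(m+e₁)−v(m), v(m+e₂)−v(m)). Then there is a universal constant C such that |v(l)| ≤ C·‖Dv‖_{ℓ²}·(1 + log|l|) for all l ∈ ℤ² \ {0}. -/
/-!
For finite sets `s, t` of lattice points inside a square of side `M`, joining every pair of
points by an L-shaped lattice path and applying Cauchy–Schwarz gives
`|avg_s v - avg_t v| ≤ 2 M⁴ / (#s #t) · √2 ‖Dv‖`, which is scale invariant when the sides are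
comparable. So passing from the square of side `2^k` at a corner to the one of side `2^(k+1)`
costs `O(‖Dv‖)`, and so does passing between the squares of side `2^K ≥ |l|` at `0` and at `l`.
Chaining `v 0 → … → v l` through `O(log |l|)` such links gives the bound.
-/

open Finset
open scoped BigOperators

namespace DiscreteH1

lemma sum_Ico_sub_eq_sub {G : Type*} [AddCommGroup G] (f : ℤ → G) {i k : ℤ} (hik : i ≤ k) :
    ∑ t ∈ Ico i k, (f (t + 1) - f t) = f k - f i := by
  induction k, hik using Int.leInduction with
  | base => simp
  | succ k hik ih => rw [← sum_Ico_add_eq_sum_Ico_add_one hik, ih]; abel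

lemma abs_sub_le_sum_Ico_abs_sub (f : ℤ → ℝ) {a b i k : ℤ} (hi : i ∈ Icc a b)
    (hk : k ∈ Icc a b) : |f k - f i| ≤ ∑ t ∈ Ico a b, |f (t + 1) - f t| := by
  wlog hik : i ≤ k generalizing i k
  · rw [abs_sub_comm]; exact this hk hi (le_of_not_ge hik)
  rw [mem_Icc] at hi hk
  calc |f k - f i| = |∑ t ∈ Ico i k, (f (t + 1) - f t)| := by rw [sum_Ico_sub_eq_sub f hik]
    _ ≤ ∑ t ∈ Ico i k, |f (t + 1) - f t| := abs_sum_le_sum_abs _ _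
    _ ≤ ∑ t ∈ Ico a b, |f (t + 1) - f t| :=
        sum_le_sum_of_subset_of_nonneg (Ico_subset_Ico hi.1 hk.2) fun _ _ _ => abs_nonneg _

lemma expect_sub_expect_eq_expect_expect {ι : Type*} (f : ι → ℝ) {s t : Finset ι}
    (hs : s.Nonempty) (ht : t.Nonempty) :
    𝔼 p ∈ s, f p - 𝔼 q ∈ t, f q = 𝔼 p ∈ s, 𝔼 q ∈ t, (f p - f q) := by
  simp [expect_sub_distrib, expect_const hs, expect_const ht]

lemma abs_expect_sub_expect_le {ι : Type*} (f : ι → ℝ) {s t u : Finset ι}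
    (hs : s.Nonempty) (ht : t.Nonempty) (hsu : s ⊆ u) (htu : t ⊆ u) :
    |𝔼 p ∈ s, f p - 𝔼 q ∈ t, f q| ≤ (∑ p ∈ u, ∑ q ∈ u, |f p - f q|) / (#s * #t) := by
  rw [expect_sub_expect_eq_expect_expect f hs ht]
  calc |𝔼 p ∈ s, 𝔼 q ∈ t, (f p - f q)| ≤ 𝔼 p ∈ s, 𝔼 q ∈ t, |f p - f q| :=
        (abs_expect_le _ _).trans (expect_le_expect fun p _ => abs_expect_le _ _)
    _ = (∑ p ∈ s, ∑ q ∈ t, |f p - f q|) / (#s * #t) := by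
        simp only [expect_eq_sum_div_card, ← sum_div, div_div, mul_comm]
    _ ≤ (∑ p ∈ u, ∑ q ∈ u, |f p - f q|) / (#s * #t) := by
        gcongr ?_ / _
        refine (sum_le_sum fun p _ => sum_le_sum_of_subset_of_nonneg htu fun _ _ _ =>
          abs_nonneg _).trans ?_
        exact sum_le_sum_of_subset_of_nonneg hsu fun _ _ _ => sum_nonneg fun _ _ => abs_nonneg _

noncomputable def square (c : ℤ × ℤ) (N : ℕ) : Finset (ℤ × ℤ) :=
  Ico c.1 (c.1 + N) ×ˢ Ico c.2 (c.2 + N)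

lemma card_square (c : ℤ × ℤ) (N : ℕ) : #(square c N) = N ^ 2 := by
  simp [square, sq]

lemma square_nonempty (c : ℤ × ℤ) {N : ℕ} (hN : 0 < N) : (square c N).Nonempty := by
  rw [← card_pos, card_square]; positivity

lemma square_one (c : ℤ × ℤ) : square c 1 = {c} := by
  ext ⟨a, b⟩
  simp only [square, mem_product, mem_Ico, mem_singleton, Prod.ext_iff, Nat.cast_one]
  omega

lemma square_subset_square {c d : ℤ × ℤ} {N M : ℕ} (h₁ : d.1 ≤ c.1) (h₂ : d.2 ≤ c.2)
    (h₃ : c.1 + N ≤ d.1 + M) (h₄ : c.2 + N ≤ d.2 + M) : square c N ⊆ square d M :=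
  product_subset_product (Ico_subset_Ico h₁ h₃) (Ico_subset_Ico h₂ h₄)

variable (v : ℤ × ℤ → ℝ)

def gradAbs (m : ℤ × ℤ) : ℝ := |v (m + (1, 0)) - v m| + |v (m + (0, 1)) - v m|

def energyDensity (m : ℤ × ℤ) : ℝ := (v (m + (1, 0)) - v m) ^ 2 + (v (m + (0, 1)) - v m) ^ 2

lemma energyDensity_nonneg (m : ℤ × ℤ) : 0 ≤ energyDensity v m := by
  unfold energyDensity; positivity

lemma gradAbs_sq_le (m : ℤ × ℤ) : gradAbs v m ^ 2 ≤ 2 * energyDensity v m := by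
  unfold gradAbs energyDensity
  nlinarith [sq_abs (v (m + (1, 0)) - v m), sq_abs (v (m + (0, 1)) - v m),
    sq_nonneg (|v (m + (1, 0)) - v m| - |v (m + (0, 1)) - v m|)]

lemma abs_sub_le_of_mem_square {c : ℤ × ℤ} {M : ℕ} {p q : ℤ × ℤ} (hp : p ∈ square c M)
    (hq : q ∈ square c M) :
    |v p - v q| ≤ ∑ t ∈ Ico c.1 (c.1 + M), gradAbs v (t, p.2)
      + ∑ t ∈ Ico c.2 (c.2 + M), gradAbs v (q.1, t) := by
  simp only [square, mem_product] at hp hq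
  have row : |v (q.1, p.2) - v p| ≤ ∑ t ∈ Ico c.1 (c.1 + M), gradAbs v (t, p.2) :=
    (abs_sub_le_sum_Ico_abs_sub (fun t => v (t, p.2)) (Ico_subset_Icc_self hp.1)
      (Ico_subset_Icc_self hq.1)).trans <| sum_le_sum fun t _ =>
        le_add_of_le_of_nonneg (le_of_eq (by simp))
          (abs_nonneg (v ((t, p.2) + (0, 1)) - v (t, p.2)))
  have col : |v q - v (q.1, p.2)| ≤ ∑ t ∈ Ico c.2 (c.2 + M), gradAbs v (q.1, t) :=
    (abs_sub_le_sum_Ico_abs_sub (fun t => v (q.1, t)) (Ico_subset_Icc_self hp.2)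
      (Ico_subset_Icc_self hq.2)).trans <| sum_le_sum fun t _ =>
        le_add_of_nonneg_of_le (abs_nonneg (v ((q.1, t) + (1, 0)) - v (q.1, t)))
          (le_of_eq (by simp))
  calc |v p - v q| ≤ |v (q.1, p.2) - v p| + |v q - v (q.1, p.2)| := by
        rw [abs_sub_comm (v (q.1, p.2)) (v p), abs_sub_comm (v q)]
        exact abs_sub_le (v p) (v (q.1, p.2)) (v q)
    _ ≤ _ := add_le_add row col

lemma sum_sum_abs_sub_le (c : ℤ × ℤ) (M : ℕ) :
    ∑ p ∈ square c M, ∑ q ∈ square c M, |v p - v q|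
      ≤ 2 * M ^ 3 * ∑ m ∈ square c M, gradAbs v m := by
  refine (sum_le_sum fun p hp => sum_le_sum fun q hq =>
    abs_sub_le_of_mem_square v hp hq).trans_eq ?_
  simp only [sum_add_distrib, sum_const, square, sum_product, card_product,
    Int.card_Ico, add_sub_cancel_left, Int.toNat_natCast, nsmul_eq_mul, ← mul_sum]
  rw [sum_comm (s := Ico c.2 _)]
  push_cast
  ring

lemma sum_gradAbs_le (s : Finset (ℤ × ℤ)) :
    ∑ m ∈ s, gradAbs v m ≤ √(#s) * √(2 * ∑ m ∈ s, energyDensity v m) := by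
  rw [← Real.sqrt_mul (Nat.cast_nonneg _)]
  refine Real.le_sqrt_of_sq_le ?_
  calc (∑ m ∈ s, gradAbs v m) ^ 2 ≤ #s * ∑ m ∈ s, gradAbs v m ^ 2 := sq_sum_le_card_mul_sum_sq
    _ ≤ #s * (2 * ∑ m ∈ s, energyDensity v m) := by
        gcongr
        rw [mul_sum]
        exact sum_le_sum fun m _ => gradAbs_sq_le v m

theorem abs_expect_sub_expect_le_of_subset_square {s t : Finset (ℤ × ℤ)} {c : ℤ × ℤ} {M : ℕ}
    (hs : s.Nonempty) (ht : t.Nonempty) (hsc : s ⊆ square c M) (htc : t ⊆ square c M) :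
    |𝔼 p ∈ s, v p - 𝔼 q ∈ t, v q|
      ≤ 2 * M ^ 4 / (#s * #t) * √(2 * ∑ m ∈ square c M, energyDensity v m) := by
  calc |𝔼 p ∈ s, v p - 𝔼 q ∈ t, v q|
      ≤ (∑ p ∈ square c M, ∑ q ∈ square c M, |v p - v q|) / (#s * #t) :=
        abs_expect_sub_expect_le v hs ht hsc htc
    _ ≤ 2 * M ^ 3 * (M * √(2 * ∑ m ∈ square c M, energyDensity v m)) / (#s * #t) := by
        gcongr
        refine (sum_sum_abs_sub_le v c M).trans ?_
        gcongr
        simpa [card_square] using sum_gradAbs_le v (square c M)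
    _ = 2 * M ^ 4 / (#s * #t) * √(2 * ∑ m ∈ square c M, energyDensity v m) := by ring

variable {v}

theorem abs_expect_square_sub_expect_square_le (hv : Summable (energyDensity v))
    {c d e : ℤ × ℤ} {N₁ N₂ M : ℕ} (hN₁ : 0 < N₁) (hN₂ : 0 < N₂)
    (hc : square c N₁ ⊆ square e M) (hd : square d N₂ ⊆ square e M) :
    |𝔼 p ∈ square c N₁, v p - 𝔼 q ∈ square d N₂, v q|
      ≤ 2 * M ^ 4 / (N₁ ^ 2 * N₂ ^ 2) * √(2 * ∑' m, energyDensity v m) := by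
  refine (abs_expect_sub_expect_le_of_subset_square v (square_nonempty c hN₁)
    (square_nonempty d hN₂) hc hd).trans ?_
  rw [card_square, card_square]
  push_cast
  gcongr
  exact hv.sum_le_tsum _ fun m _ => energyDensity_nonneg v m

lemma abs_expect_square_sub_expect_square_two_mul_le (hv : Summable (energyDensity v))
    (c : ℤ × ℤ) {N : ℕ} (hN : 0 < N) :
    |𝔼 p ∈ square c N, v p - 𝔼 q ∈ square c (2 * N), v q|
      ≤ 8 * √(2 * ∑' m, energyDensity v m) := by
  refine (abs_expect_square_sub_expect_square_le hv hN (by omega)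
    (square_subset_square le_rfl le_rfl (by push_cast; omega) (by push_cast; omega))
    subset_rfl).trans_eq ?_
  have : (N : ℝ) ≠ 0 := by positivity
  field_simp
  push_cast
  ring

lemma abs_sub_expect_square_two_pow_le (hv : Summable (energyDensity v)) (c : ℤ × ℤ) (K : ℕ) :
    |v c - 𝔼 p ∈ square c (2 ^ K), v p| ≤ 8 * K * √(2 * ∑' m, energyDensity v m) := by
  induction K with
  | zero => simp [square_one]
  | succ K ih =>
    calc |v c - 𝔼 p ∈ square c (2 ^ (K + 1)), v p|
        ≤ |v c - 𝔼 p ∈ square c (2 ^ K), v p|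
          + |𝔼 p ∈ square c (2 ^ K), v p - 𝔼 p ∈ square c (2 * 2 ^ K), v p| := by
          rw [← pow_succ']; exact abs_sub_le _ _ _
      _ ≤ 8 * K * √(2 * ∑' m, energyDensity v m) + 8 * √(2 * ∑' m, energyDensity v m) :=
          add_le_add ih (abs_expect_square_sub_expect_square_two_mul_le hv c (by positivity))
      _ = 8 * ↑(K + 1) * √(2 * ∑' m, energyDensity v m) := by push_cast; ring

lemma abs_expect_square_sub_expect_square_le_of_natAbs_le (hv : Summable (energyDensity v))
    {c d : ℤ × ℤ} {N : ℕ} (hN : 0 < N) (h₁ : (d.1 - c.1).natAbs ≤ N)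
    (h₂ : (d.2 - c.2).natAbs ≤ N) :
    |𝔼 p ∈ square c N, v p - 𝔼 q ∈ square d N, v q|
      ≤ 32 * √(2 * ∑' m, energyDensity v m) := by
  have hN' : (N : ℝ) ≠ 0 := by positivity
  refine (abs_expect_square_sub_expect_square_le hv (e := (min c.1 d.1, min c.2 d.2))
    (M := 2 * N) hN hN (square_subset_square ?_ ?_ ?_ ?_)
    (square_subset_square ?_ ?_ ?_ ?_)).trans_eq (by field_simp; push_cast; ring)
  all_goals push_cast; omega

theorem abs_sub_le_of_natAbs_le_two_pow (hv : Summable (energyDensity v)) {c d : ℤ × ℤ} {K : ℕ}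
    (h₁ : (d.1 - c.1).natAbs ≤ 2 ^ K) (h₂ : (d.2 - c.2).natAbs ≤ 2 ^ K) :
    |v d - v c| ≤ 16 * (K + 2) * √(2 * ∑' m, energyDensity v m) := by
  have hc := abs_sub_expect_square_two_pow_le hv c K
  have hd := abs_sub_expect_square_two_pow_le hv d K
  have hcd := abs_expect_square_sub_expect_square_le_of_natAbs_le hv (by positivity) h₁ h₂
  rw [abs_sub_comm] at hc hcd
  linarith [abs_sub_le (v d) (𝔼 p ∈ square d (2 ^ K), v p) (v c),
    abs_sub_le (𝔼 p ∈ square d (2 ^ K), v p) (𝔼 p ∈ square c (2 ^ K), v p) (v c)]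

lemma natLog_two_natAbs_max_add_three_le {l : ℤ × ℤ} (hl : l ≠ (0, 0)) :
    (Nat.log 2 (max l.1.natAbs l.2.natAbs) : ℝ) + 3
      ≤ 3 * (1 + Real.log √((l.1 : ℝ) ^ 2 + (l.2 : ℝ) ^ 2)) := by
  set r := max l.1.natAbs l.2.natAbs with hr_def
  have hr : (1 : ℝ) ≤ r := by
    have : l.1 ≠ 0 ∨ l.2 ≠ 0 := by
      by_contra! h; exact hl (Prod.ext h.1 h.2)
    exact_mod_cast (by omega : 1 ≤ r)
  have hrL : (r : ℝ) ≤ √((l.1 : ℝ) ^ 2 + (l.2 : ℝ) ^ 2) := by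
    obtain h | h : r = l.1.natAbs ∨ r = l.2.natAbs := by omega
    all_goals
      rw [h, Nat.cast_natAbs, Int.cast_abs]
      exact Real.abs_le_sqrt (by nlinarith)
  have hlog2 : 1 / 3 < Real.log 2 := by linarith [Real.log_two_gt_d9]
  have hlogr : 0 ≤ Real.log r := Real.log_nonneg hr
  calc (Nat.log 2 r : ℝ) + 3 ≤ Real.log r / Real.log 2 + 3 := by
        gcongr; exact_mod_cast Real.natLog_le_logb r 2
    _ ≤ 3 * Real.log r + 3 := by
        gcongr; rw [div_le_iff₀ (by linarith)]; nlinarith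
    _ ≤ 3 * (1 + Real.log √((l.1 : ℝ) ^ 2 + (l.2 : ℝ) ^ 2)) := by
        have := Real.log_le_log (by linarith) hrL
        linarith

end DiscreteH1

open DiscreteH1 in
/-- Discrete logarithmic growth bound in two dimensions: there is a universal
constant `C` such that every `v : ℤ² → ℝ` with `v(0) = 0` and
`‖Dv‖_{ℓ²} < ∞` satisfies `|v(l)| ≤ C ‖Dv‖_{ℓ²} (1 + log|l|)` for `l ≠ 0`. -/
theorem discrete_log_bound :
    ∃ C : ℝ, 0 < C ∧ ∀ v : ℤ × ℤ → ℝ, v (0, 0) = 0 →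
      Summable (fun m : ℤ × ℤ =>
        (v (m + (1, 0)) - v m) ^ 2 + (v (m + (0, 1)) - v m) ^ 2) →
      ∀ l : ℤ × ℤ, l ≠ (0, 0) →
        |v l| ≤ C * Real.sqrt (∑' m : ℤ × ℤ,
            ((v (m + (1, 0)) - v m) ^ 2 + (v (m + (0, 1)) - v m) ^ 2)) *
          (1 + Real.log (Real.sqrt ((l.1 : ℝ) ^ 2 + (l.2 : ℝ) ^ 2))) := by
  refine ⟨48 * √2, by positivity, fun v h0 hv l hl => ?_⟩
  set r := max l.1.natAbs l.2.natAbs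
  have hr : r < 2 ^ (Nat.log 2 r + 1) := Nat.lt_pow_succ_log_self one_lt_two r
  have hgrowth := abs_sub_le_of_natAbs_le_two_pow (v := v) hv (c := (0, 0)) (d := l)
    (K := Nat.log 2 r + 1) (by simp only [sub_zero]; omega) (by simp only [sub_zero]; omega)
  rw [h0, sub_zero, Real.sqrt_mul zero_le_two] at hgrowth
  calc |v l| ≤ 16 * √2 * √(∑' m, energyDensity v m) * ((Nat.log 2 r : ℝ) + 3) := by
        refine hgrowth.trans_eq ?_; push_cast; ring
    _ ≤ 16 * √2 * √(∑' m, energyDensity v m)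
          * (3 * (1 + Real.log √((l.1 : ℝ) ^ 2 + (l.2 : ℝ) ^ 2))) := by
        gcongr; exact natLog_two_natAbs_max_add_three_le hl
    _ = _ := by unfold energyDensity; ring
end
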